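/- arXiv:2407.00533 — 4 statements merged into one kernel-verified Lean document; each statement's English description precedes it below -/
import Mathlib

section
/- Let E : ℝ^k → ℝ and let ∇̄E : ℝ^k × ℝ^k → ℝ^k be a discrete gradient of E, i.e., ∇̄E(Y,X)ᵀ(Y−X) = E(Y) − E(X) for all X, Y. Let B̃ : ℝ^k × ℝ^k → Matrix(k,k,ℝ) take values in symmetric negative semi-definite matrices, and let Δt > 0. If X^{n+1} satisfies (X^{n+1} − X^n)/Δt = B̃(X^{n+1},X^n) ∇̄E(X^{n+1},X^n), then E(X^{n+1}) ≤ E(X^n). -/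
open Matrix

/-- Discrete gradient scheme with symmetric negative semi-definite matrix dissipates `E`. -/
theorem stmt2 (k : ℕ) (E : (Fin k → ℝ) → ℝ)
    (DE : (Fin k → ℝ) → (Fin k → ℝ) → (Fin k → ℝ))
    (hDE : ∀ X Y : Fin k → ℝ, DE Y X ⬝ᵥ (Y - X) = E Y - E X)
    (Bt : (Fin k → ℝ) → (Fin k → ℝ) → Matrix (Fin k) (Fin k) ℝ)
    (hBsymm : ∀ X Y, (Bt Y X).IsSymm)
    (hBneg : ∀ X Y (v : Fin k → ℝ), v ⬝ᵥ (Bt Y X).mulVec v ≤ 0)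
    (Δt : ℝ) (hΔt : 0 < Δt)
    (Xn Xn1 : Fin k → ℝ)
    (hscheme : (Δt)⁻¹ • (Xn1 - Xn) = (Bt Xn1 Xn).mulVec (DE Xn1 Xn)) :
    E Xn1 ≤ E Xn := by
  have hdiff : Xn1 - Xn = Δt • (Bt Xn1 Xn).mulVec (DE Xn1 Xn) := by
    rw [← hscheme, smul_smul, mul_inv_cancel₀ hΔt.ne', one_smul]
  have key : E Xn1 - E Xn = Δt * (DE Xn1 Xn ⬝ᵥ (Bt Xn1 Xn).mulVec (DE Xn1 Xn)) := by
    rw [← hDE Xn Xn1, hdiff, dotProduct_smul, smul_eq_mul]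
  have := mul_nonpos_of_nonneg_of_nonpos hΔt.le (hBneg Xn Xn1 (DE Xn1 Xn))
  linarith [key ▸ this]
end

section
/- Suppose additionally that A(x)·x = 0 for all x ∈ ℝ^d. Then with 𝒜 as in the Landau particle discretization and X = (x₁,…,x_N), one has Xᵀ𝒜 = 0, i.e., ∑_{i=1}^N x_iᵀ 𝒜_{ij} = 0 for every j. -/
open Matrix Finset

/-- If moreover `A(x)·x = 0`, then `Xᵀ𝒜 = 0` for the Landau particle matrix `𝒜`. -/
theorem stmt6 (d N : ℕ) (A : (Fin d → ℝ) → Matrix (Fin d) (Fin d) ℝ)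
    (hAeven : ∀ x, A (-x) = A x)
    (hAsymm : ∀ x, (A x).IsSymm)
    (hAnull : ∀ x, (A x).mulVec x = 0)
    (w : Fin N → ℝ) (hw : ∀ p, 0 < w p)
    (x : Fin N → (Fin d → ℝ))
    (𝒜 : Matrix (Fin N × Fin d) (Fin N × Fin d) ℝ)
    (h𝒜 : ∀ (i j : Fin N) (a b : Fin d),
      𝒜 (i, a) (j, b) =
        if i = j then w i * ∑ l ∈ univ.erase i, w l * A (x i - x l) a b
        else - (w i * w j * A (x i - x j) a b)) :
    ∀ (j : Fin N) (b : Fin d),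
      ∑ i : Fin N, ∑ a : Fin d, x i a * 𝒜 (i, a) (j, b) = 0 := by
  intro j b
  have key : ∀ i : Fin N,
      ∑ a : Fin d, x i a * A (x i - x j) a b = ∑ a : Fin d, x j a * A (x j - x i) a b := by
    intro i
    have hM : A (x j - x i) = A (x i - x j) := by
      rw [← hAeven (x i - x j), neg_sub]
    have hz : ∑ a : Fin d, (x i a - x j a) * A (x i - x j) a b = 0 := by
      have h2 : (A (x i - x j)).mulVec (x i - x j) b = 0 := by
        rw [hAnull]; rfl
      rw [Matrix.mulVec, dotProduct] at h2
      rw [← h2]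
      apply Finset.sum_congr rfl
      intro a _
      rw [(hAsymm (x i - x j)).apply b a]
      simp [mul_comm]
    have : ∑ a : Fin d, x i a * A (x i - x j) a b
        = ∑ a : Fin d, x j a * A (x i - x j) a b := by
      have := hz
      simp only [sub_mul] at this
      rw [Finset.sum_sub_distrib] at this
      linarith
    rw [this, hM]
  rw [← Finset.sum_erase_add _ _ (Finset.mem_univ j)]
  have h1 : ∑ i ∈ univ.erase j, ∑ a : Fin d, x i a * 𝒜 (i, a) (j, b)
      = - ∑ i ∈ univ.erase j, w j * w i * ∑ a : Fin d, x j a * A (x j - x i) a b := by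
    rw [← Finset.sum_neg_distrib]
    apply Finset.sum_congr rfl
    intro i hi
    have hij : i ≠ j := Finset.ne_of_mem_erase hi
    simp only [h𝒜, if_neg hij]
    rw [← key i, Finset.mul_sum, ← Finset.sum_neg_distrib]
    apply Finset.sum_congr rfl
    intro a _
    ring
  have h2 : ∑ a : Fin d, x j a * 𝒜 (j, a) (j, b)
      = ∑ i ∈ univ.erase j, w j * w i * ∑ a : Fin d, x j a * A (x j - x i) a b := by
    simp only [h𝒜, if_pos rfl]
    calc ∑ a : Fin d, x j a * (w j * ∑ l ∈ univ.erase j, w l * A (x j - x l) a b)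
        = ∑ a : Fin d, ∑ l ∈ univ.erase j, w j * w l * (x j a * A (x j - x l) a b) := by
          apply Finset.sum_congr rfl
          intro a _
          rw [Finset.mul_sum, Finset.mul_sum]
          apply Finset.sum_congr rfl
          intro l _
          ring
      _ = ∑ l ∈ univ.erase j, ∑ a : Fin d, w j * w l * (x j a * A (x j - x l) a b) :=
          Finset.sum_comm
      _ = ∑ l ∈ univ.erase j, w j * w l * ∑ a : Fin d, x j a * A (x j - x l) a b := by
          apply Finset.sum_congr rfl
          intro l _
          rw [Finset.mul_sum]
  rw [h1, h2, neg_add_cancel]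
end

section
/- Consider the fully discrete Landau scheme (X^{n+1}−X^n)/Δt = −W⁻¹𝒜(X̄)W⁻¹ ∇̄E(X^{n+1},X^n), where X̄ = (X^{n+1}+X^n)/2, W is the positive diagonal weight matrix, 𝒜(·) is symmetric positive semi-definite with vanishing blockwise column sums, and ∇̄E is a discrete gradient of E. Then the momentum P(X) = ∑_p w_p x_p satisfies P(X^{n+1}) = P(X^n). -/
open Matrix Finset

/-- Momentum conservation for the fully discrete Landau scheme. -/
theorem stmt10 (d N : ℕ) (w : Fin N → ℝ) (hw : ∀ p, 0 < w p)
    (W : Matrix (Fin N × Fin d) (Fin N × Fin d) ℝ)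
    (hW : W = Matrix.diagonal (fun p => w p.1))
    (𝒜 : ((Fin N × Fin d) → ℝ) → Matrix (Fin N × Fin d) (Fin N × Fin d) ℝ)
    (h𝒜symm : ∀ Z, (𝒜 Z).IsSymm)
    (h𝒜psd : ∀ Z (Y : (Fin N × Fin d) → ℝ), 0 ≤ Y ⬝ᵥ (𝒜 Z).mulVec Y)
    (hcolsum : ∀ (Z : (Fin N × Fin d) → ℝ) (a : Fin d) (q : Fin N × Fin d),
      ∑ i : Fin N, 𝒜 Z (i, a) q = 0)
    (E : ((Fin N × Fin d) → ℝ) → ℝ)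
    (DE : ((Fin N × Fin d) → ℝ) → ((Fin N × Fin d) → ℝ) → ((Fin N × Fin d) → ℝ))
    (hDE : ∀ X Y, DE Y X ⬝ᵥ (Y - X) = E Y - E X)
    (Δt : ℝ) (hΔt : 0 < Δt)
    (Xn Xn1 : (Fin N × Fin d) → ℝ)
    (hscheme : (Δt)⁻¹ • (Xn1 - Xn) =
      -(W⁻¹.mulVec ((𝒜 ((1 / 2 : ℝ) • (Xn1 + Xn))).mulVec
        (W⁻¹.mulVec (DE Xn1 Xn))))) :
    ∀ a : Fin d, ∑ p : Fin N, w p * Xn1 (p, a) = ∑ p : Fin N, w p * Xn (p, a) := by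
  have hWinv : W⁻¹ = Matrix.diagonal (fun p : Fin N × Fin d => (w p.1)⁻¹) := by
    apply Matrix.inv_eq_right_inv
    rw [hW, Matrix.diagonal_mul_diagonal]
    have : (fun p : Fin N × Fin d => w p.1 * (w p.1)⁻¹) = fun _ => (1:ℝ) := by
      funext p; exact mul_inv_cancel₀ (hw p.1).ne'
    rw [this, Matrix.diagonal_one]
  intro a
  set Z := (1 / 2 : ℝ) • (Xn1 + Xn) with hZ
  set u := (𝒜 Z).mulVec (W⁻¹.mulVec (DE Xn1 Xn)) with hu
  have h1 : Xn1 - Xn = Δt • (-(W⁻¹.mulVec u)) := by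
    rw [← hscheme, smul_smul, mul_inv_cancel₀ hΔt.ne', one_smul]
  have key : ∀ p : Fin N, w p * Xn1 (p, a) - w p * Xn (p, a) = -Δt * u (p, a) := by
    intro p
    have h2 := congrFun h1 (p, a)
    simp only [Pi.sub_apply, Pi.smul_apply, Pi.neg_apply, hWinv,
      Matrix.mulVec_diagonal, smul_eq_mul] at h2
    rw [← mul_sub, h2]
    have : w p * (Δt * -((w p)⁻¹ * u (p, a))) = -Δt * (w p * (w p)⁻¹ * u (p, a)) := by ring
    rw [this, mul_inv_cancel₀ (hw p).ne', one_mul]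
  have husum : ∑ p : Fin N, u (p, a) = 0 := by
    have : ∀ p : Fin N, u (p, a) = ∑ q : Fin N × Fin d, 𝒜 Z (p, a) q * (W⁻¹.mulVec (DE Xn1 Xn)) q := by
      intro p; rfl
    simp only [this]
    rw [Finset.sum_comm]
    apply Finset.sum_eq_zero
    intro q _
    rw [← Finset.sum_mul, hcolsum, zero_mul]
  have hsum : ∑ p : Fin N, (w p * Xn1 (p, a) - w p * Xn (p, a)) = 0 := by
    calc ∑ p : Fin N, (w p * Xn1 (p, a) - w p * Xn (p, a))
        = ∑ p : Fin N, -Δt * u (p, a) := Finset.sum_congr rfl (fun p _ => key p)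
      _ = -Δt * ∑ p : Fin N, u (p, a) := by rw [Finset.mul_sum]
      _ = 0 := by rw [husum, mul_zero]
  rw [Finset.sum_sub_distrib] at hsum
  linarith
end

section
/- Consider the fully discrete Landau scheme (X^{n+1}−X^n)/Δt = −W⁻¹𝒜(X̄)W⁻¹ ∇̄E(X^{n+1},X^n) with X̄ = (X^{n+1}+X^n)/2 and 𝒜 satisfying Zᵀ𝒜(Z) = 0 for all Z. Then the kinetic energy K(X) = ½∑_p w_p|x_p|² satisfies K(X^{n+1}) = K(X^n). -/
open Matrix Finset

/-- Kinetic energy conservation for the fully discrete Landau scheme when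
`Zᵀ𝒜(Z) = 0` for all `Z`. -/
theorem stmt11 (d N : ℕ) (w : Fin N → ℝ) (hw : ∀ p, 0 < w p)
    (W : Matrix (Fin N × Fin d) (Fin N × Fin d) ℝ)
    (hW : W = Matrix.diagonal (fun p => w p.1))
    (𝒜 : ((Fin N × Fin d) → ℝ) → Matrix (Fin N × Fin d) (Fin N × Fin d) ℝ)
    (hnull : ∀ Z : (Fin N × Fin d) → ℝ, Matrix.vecMul Z (𝒜 Z) = 0)
    (E : ((Fin N × Fin d) → ℝ) → ℝ)
    (DE : ((Fin N × Fin d) → ℝ) → ((Fin N × Fin d) → ℝ) → ((Fin N × Fin d) → ℝ))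
    (hDE : ∀ X Y, DE Y X ⬝ᵥ (Y - X) = E Y - E X)
    (Δt : ℝ) (hΔt : 0 < Δt)
    (Xn Xn1 : (Fin N × Fin d) → ℝ)
    (hscheme : (Δt)⁻¹ • (Xn1 - Xn) =
      -(W⁻¹.mulVec ((𝒜 ((1 / 2 : ℝ) • (Xn1 + Xn))).mulVec
        (W⁻¹.mulVec (DE Xn1 Xn))))) :
    (1 / 2 : ℝ) * ∑ p : Fin N, w p * ∑ a : Fin d, (Xn1 (p, a)) ^ 2 =
    (1 / 2 : ℝ) * ∑ p : Fin N, w p * ∑ a : Fin d, (Xn (p, a)) ^ 2 := by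
  set Z : (Fin N × Fin d) → ℝ := (1 / 2 : ℝ) • (Xn1 + Xn) with hZ
  have hWinv : W * W⁻¹ = 1 := by
    apply Matrix.mul_nonsing_inv
    rw [hW, Matrix.det_diagonal]
    exact isUnit_iff_ne_zero.mpr (Finset.prod_ne_zero_iff.mpr
      (fun i _ => (hw i.1).ne'))
  have hdiff : Xn1 - Xn = -Δt • (W⁻¹.mulVec ((𝒜 Z).mulVec
      (W⁻¹.mulVec (DE Xn1 Xn)))) := by
    have := congrArg (fun v => Δt • v) hscheme
    simpa [smul_smul, mul_inv_cancel₀ hΔt.ne', neg_smul] using this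
  have hkey : (Z ᵥ* W) ⬝ᵥ (Xn1 - Xn) = 0 := by
    rw [hdiff, dotProduct_smul]
    have : (Z ᵥ* W) ⬝ᵥ (W⁻¹.mulVec ((𝒜 Z).mulVec (W⁻¹.mulVec (DE Xn1 Xn))))
        = ((Z ᵥ* W) ᵥ* W⁻¹) ⬝ᵥ ((𝒜 Z).mulVec (W⁻¹.mulVec (DE Xn1 Xn))) := by
      rw [Matrix.dotProduct_mulVec]
    rw [this, Matrix.vecMul_vecMul, hWinv, Matrix.vecMul_one,
      Matrix.dotProduct_mulVec, hnull Z, zero_dotProduct, smul_zero]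
  -- rewrite hkey into sums
  have hexp : (Z ᵥ* W) ⬝ᵥ (Xn1 - Xn)
      = (1 / 2 : ℝ) * ∑ p : Fin N, w p * ∑ a : Fin d, (Xn1 (p, a)) ^ 2
      - (1 / 2 : ℝ) * ∑ p : Fin N, w p * ∑ a : Fin d, (Xn (p, a)) ^ 2 := by
    rw [hW]
    simp only [Matrix.vecMul_diagonal, dotProduct, hZ, Pi.smul_apply,
      Pi.add_apply, Pi.sub_apply, smul_eq_mul]
    rw [Fintype.sum_prod_type]
    rw [Finset.mul_sum, Finset.mul_sum, ← Finset.sum_sub_distrib]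
    apply Finset.sum_congr rfl
    intro p _
    simp only [Finset.mul_sum]
    rw [← Finset.sum_sub_distrib]
    apply Finset.sum_congr rfl
    intro a _
    ring
  linarith [hexp ▸ hkey]
end
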